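/- arXiv:2503.02110 — 2 statements merged into one kernel-verified Lean document; each statement's English description precedes it below -/
import Mathlib

section
/- For every real λ > 1 and every q ∈ (0,1/2), the point p*_λ(q) = 1/(1+((1-q)/q)^{λ/(λ-1)}) satisfies 0 < p*_λ(q) < q, and for every p ∈ [0,1/2] one has λ·KL(p‖q) + H(p) ≥ λ·KL(p*_λ(q)‖q) + H(p*_λ(q)); consequently Q_λ(q) = U_λ(q). -/
open MeasureTheory Filter

noncomputable def binEnt (p : ℝ) : ℝ :=
  -(p * Real.logb 2 p) - (1 - p) * Real.logb 2 (1 - p)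

noncomputable def klBin (a b : ℝ) : ℝ :=
  a * Real.logb 2 (a / b) + (1 - a) * Real.logb 2 ((1 - a) / (1 - b))

noncomputable def pstar (lam q : ℝ) : ℝ := 1 / (1 + ((1 - q) / q) ^ (lam / (lam - 1)))

noncomputable def Ulam (lam q : ℝ) : ℝ :=
  lam * klBin (pstar lam q) q + binEnt (pstar lam q)

/-!
Put `a = p*_λ(q)`, so that `log (a / (1 - a)) = λ/(λ-1) · log (q / (1 - q))`. Expanding the logarithms,
`λ·KL(p‖q) + H(p) - (λ-1)·KL(p‖a)` is affine in `p`, and its slope is `λ·logit q - (λ-1)·logit a = 0`.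
Hence `λ·KL(p‖q) + H(p) = (λ-1)·KL(p‖a) + C`, and Gibbs' inequality `KL(p‖a) ≥ 0 = KL(a‖a)` shows that
`a` minimises the objective. That `0 < a < q` comes from `(1-q)/q > 1` and `λ/(λ-1) > 1`.
-/

open Real InformationTheory

lemma mul_logb_div_of_ne_zero {b : ℝ} (p : ℝ) (hb : b ≠ 0) :
    p * logb 2 (p / b) = p * logb 2 p - p * logb 2 b := by
  rcases eq_or_ne p 0 with rfl | hp
  · simp
  · rw [logb_div hp hb, mul_sub]

lemma klBin_self (a : ℝ) : klBin a a = 0 := by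
  rcases eq_or_ne a 0 with rfl | ha
  · simp [klBin]
  rcases eq_or_ne (1 - a) 0 with ha' | ha'
  · obtain rfl : a = 1 := by linarith
    simp [klBin]
  · simp [klBin, div_self ha, div_self ha']

lemma klBin_eq_klFun {b : ℝ} (p : ℝ) (hb0 : b ≠ 0) (hb1 : 1 - b ≠ 0) :
    klBin p b = (b * klFun (p / b) + (1 - b) * klFun ((1 - p) / (1 - b))) / log 2 := by
  simp only [klBin, klFun, logb]
  field_simp
  ring

theorem klBin_nonneg {p b : ℝ} (hp0 : 0 ≤ p) (hp1 : p ≤ 1) (hb0 : 0 < b) (hb1 : b < 1) :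
    0 ≤ klBin p b := by
  have hb1' : 0 < 1 - b := sub_pos.2 hb1
  rw [klBin_eq_klFun p hb0.ne' hb1'.ne']
  have := klFun_nonneg (div_nonneg hp0 hb0.le)
  have := klFun_nonneg (div_nonneg (sub_nonneg.2 hp1) hb1'.le)
  have := log_pos one_lt_two
  positivity

lemma lam_mul_klBin_add_binEnt_eq {lam q a : ℝ} (hq0 : q ≠ 0) (hq1 : 1 - q ≠ 0) (ha0 : a ≠ 0)
    (ha1 : 1 - a ≠ 0)
    (hodds : (lam - 1) * logb 2 (a / (1 - a)) = lam * logb 2 (q / (1 - q))) (p : ℝ) :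
    lam * klBin p q + binEnt p =
      (lam - 1) * klBin p a + ((lam - 1) * logb 2 (1 - a) - lam * logb 2 (1 - q)) := by
  rw [logb_div ha0 ha1, logb_div hq0 hq1] at hodds
  simp only [klBin, binEnt, mul_logb_div_of_ne_zero _ hq0, mul_logb_div_of_ne_zero _ hq1,
    mul_logb_div_of_ne_zero _ ha0, mul_logb_div_of_ne_zero _ ha1]
  linear_combination p * hodds

section pstar

variable {lam q : ℝ}

lemma odds_rpow_pos (r : ℝ) (hq0 : 0 < q) (hq1 : q < 1) : 0 < ((1 - q) / q) ^ r := by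
  have := sub_pos.2 hq1
  positivity

lemma one_sub_pstar (hq0 : 0 < q) (hq1 : q < 1) :
    1 - pstar lam q = ((1 - q) / q) ^ (lam / (lam - 1)) * pstar lam q := by
  have := odds_rpow_pos (lam / (lam - 1)) hq0 hq1
  rw [pstar]
  field_simp
  ring

lemma pstar_pos (hq0 : 0 < q) (hq1 : q < 1) : 0 < pstar lam q := by
  have := odds_rpow_pos (lam / (lam - 1)) hq0 hq1
  rw [pstar]
  positivity

lemma pstar_lt_one (hq0 : 0 < q) (hq1 : q < 1) : pstar lam q < 1 := by
  have := odds_rpow_pos (lam / (lam - 1)) hq0 hq1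
  rw [pstar, div_lt_one (by positivity)]
  linarith

lemma sub_one_mul_logb_odds_pstar (hlam : lam ≠ 1) (hq0 : 0 < q) (hq1 : q < 1) :
    (lam - 1) * logb 2 (pstar lam q / (1 - pstar lam q)) = lam * logb 2 (q / (1 - q)) := by
  have hq1' := sub_pos.2 hq1
  have hlam' : lam - 1 ≠ 0 := sub_ne_zero.2 hlam
  rw [one_sub_pstar hq0 hq1, div_mul_cancel_right₀ (pstar_pos hq0 hq1).ne',
    logb_inv, logb_rpow_eq_mul_logb_of_pos (by positivity), ← inv_div (1 - q) q, logb_inv]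
  field_simp

lemma pstar_lt (hlam : 1 < lam) (hq0 : 0 < q) (hq : q < 1 / 2) : pstar lam q < q := by
  have hodds : 1 < (1 - q) / q := by rw [lt_div_iff₀ hq0]; linarith
  have hexp : 1 < lam / (lam - 1) := by rw [lt_div_iff₀ (by linarith)]; linarith
  have hpow : (1 - q) / q < ((1 - q) / q) ^ (lam / (lam - 1)) := by
    simpa using rpow_lt_rpow_of_exponent_lt hodds hexp
  rw [pstar, div_lt_iff₀ (by positivity)]
  have : q * ((1 - q) / q) = 1 - q := by field_simp
  nlinarith

theorem lam_mul_klBin_pstar_add_binEnt_le (hlam : 1 < lam) (hq0 : 0 < q) (hq1 : q < 1) {p : ℝ}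
    (hp0 : 0 ≤ p) (hp1 : p ≤ 1) :
    lam * klBin (pstar lam q) q + binEnt (pstar lam q) ≤ lam * klBin p q + binEnt p := by
  have ha0 := pstar_pos (lam := lam) hq0 hq1
  have ha1 := pstar_lt_one (lam := lam) hq0 hq1
  have htilt := lam_mul_klBin_add_binEnt_eq hq0.ne' (sub_pos.2 hq1).ne' ha0.ne'
    (sub_pos.2 ha1).ne' (sub_one_mul_logb_odds_pstar hlam.ne' hq0 hq1)
  rw [htilt, htilt, klBin_self]
  have := klBin_nonneg hp0 hp1 ha0 ha1
  nlinarith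

end pstar

theorem Qlam_eq_Ulam_of_large_lambda
    (lam : ℝ) (hlam : 1 < lam) (q : ℝ) (hq0 : 0 < q) (hq : q < 1 / 2) :
    0 < pstar lam q ∧ pstar lam q < q ∧
    (∀ p ∈ Set.Icc (0 : ℝ) (1 / 2),
      lam * klBin (pstar lam q) q + binEnt (pstar lam q) ≤ lam * klBin p q + binEnt p) ∧
    sInf ((fun p => lam * klBin p q + binEnt p) '' Set.Icc 0 (1 / 2)) = Ulam lam q := by
  have hq1 : q < 1 := by linarith
  have hmin : ∀ p ∈ Set.Icc (0 : ℝ) (1 / 2),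
      lam * klBin (pstar lam q) q + binEnt (pstar lam q) ≤ lam * klBin p q + binEnt p :=
    fun p hp => lam_mul_klBin_pstar_add_binEnt_le hlam hq0 hq1 hp.1 (by linarith [hp.2])
  have hmem : pstar lam q ∈ Set.Icc (0 : ℝ) (1 / 2) :=
    ⟨(pstar_pos hq0 hq1).le, by linarith [pstar_lt hlam hq0 hq]⟩
  exact ⟨pstar_pos hq0 hq1, pstar_lt hlam hq0 hq, hmin,
    IsLeast.csInf_eq ⟨Set.mem_image_of_mem _ hmem, Set.forall_mem_image.2 hmin⟩⟩
end

section
/- For every learning setup (measurable space X, probability measure D on X × {0,1}, countable hypothesis class (h_i)_{i∈I} with prior π), every sample size m ≥ 1, and every δ ∈ (0,1): with probability at least 1-δ over S ~ D^m, simultaneously for every i ∈ I with π(i) > 0, KL( L_S(i) ‖ L(i) ) ≤ ( |i|_π + log₂((m+1)/δ) ) / m. -/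
open MeasureTheory Filter

noncomputable def klBinE (a b : ℝ) : EReal :=
  if (b = 0 ∨ b = 1) ∧ a ≠ b then ⊤ else ((klBin a b : ℝ) : EReal)

structure LearningSetup (X : Type) [MeasurableSpace X] (I : Type) where
  countable : Countable I
  D : Measure (X × Bool)
  isProb : IsProbabilityMeasure D
  hyp : I → X → Bool
  hyp_measurable : ∀ i, Measurable (hyp i)
  prior : I → ℝ
  prior_nonneg : ∀ i, 0 ≤ prior i
  prior_le_one : ∀ i, prior i ≤ 1
  prior_tsum_le_one : ∑' i, ENNReal.ofReal (prior i) ≤ 1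

namespace LearningSetup

variable {X I : Type} [MeasurableSpace X] (L : LearningSetup X I)

/-- Description length `|i|_π = -log₂ π(i)`. -/
noncomputable def desc (i : I) : ℝ := -Real.logb 2 (L.prior i)

/-- Population error `L(i)`. -/
noncomputable def popErr (i : I) : ℝ := (L.D {p | L.hyp i p.1 ≠ p.2}).toReal

/-- Number of sample errors `m · L_S(i)`. -/
def errCount (m : ℕ) (i : I) (S : Fin m → X × Bool) : ℕ :=
  (Finset.univ.filter fun t => L.hyp i (S t).1 ≠ (S t).2).card

/-- Empirical error `L_S(i)`. -/
noncomputable def empErr (m : ℕ) (i : I) (S : Fin m → X × Bool) : ℝ :=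
  (L.errCount m i S : ℝ) / (m : ℝ)

/-- MDL objective `J_λ(i, S) = λ·|i|_π + log₂ C(m, m·L_S(i))`. -/
noncomputable def J (lam : ℝ) (m : ℕ) (i : I) (S : Fin m → X × Bool) : ℝ :=
  lam * L.desc i + Real.logb 2 (m.choose (L.errCount m i S) : ℝ)

/-- The m-fold product measure `D^m`. -/
noncomputable def sampleMeasure (m : ℕ) : Measure (Fin m → X × Bool) :=
  haveI := L.isProb
  Measure.pi fun _ => L.D

/-- `A` is an MDL_λ selection rule for sample size `m`. -/
def IsMDLRule (lam : ℝ) (m : ℕ) (A : (Fin m → X × Bool) → I) : Prop :=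
  (@Measurable (Fin m → X × Bool) I inferInstance ⊤ A) ∧
  ∀ᵐ S ∂ L.sampleMeasure m,
    L.empErr m (A S) S ≤ 1 / 2 ∧
    ∀ i : I, L.empErr m i S ≤ 1 / 2 → L.J lam m (A S) S ≤ L.J lam m i S

/-- Expected population error `E_{S ~ D^m}[L(A(S))]`. -/
noncomputable def expectedRisk (m : ℕ) (A : (Fin m → X × Bool) → I) : ℝ :=
  ∫ S, L.popErr (A S) ∂ L.sampleMeasure m

end LearningSetup

/-!
For a fixed hypothesis with true error `p`, the number of errors on an i.i.d. sample of size `m`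
is binomial, and the probability of exactly `k` errors is at most `2 ^ (-m · KL(k/m ‖ p))`:
dividing it by the binomial probability of `k` at the empirical rate `k/m`, which is at most one,
leaves exactly this factor. Summing over the at most `m + 1` values of `k` gives
`P(KL(L_S ‖ L) > ε) ≤ (m + 1) · 2 ^ (-m ε)`. With `ε` chosen so that this is `π(i) · δ`, a union
bound over the hypotheses, whose prior weights sum to at most one, bounds the total failure
probability by `δ`.
-/

lemma pow_mul_two_rpow_neg_mul_logb_div {a p : ℝ} {k : ℕ} (h : k ≠ 0 → 0 < a ∧ 0 < p) :
    a ^ k * (2 : ℝ) ^ (-(k * Real.logb 2 (a / p))) = p ^ k := by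
  rcases eq_or_ne k 0 with rfl | hk
  · simp
  obtain ⟨ha, hp⟩ := h hk
  rw [← mul_neg, ← Real.logb_inv, inv_div, mul_comm (k : ℝ), Real.rpow_mul zero_le_two,
    Real.rpow_logb zero_lt_two (by norm_num) (div_pos hp ha), Real.rpow_natCast, ← mul_pow,
    mul_div_cancel₀ _ ha.ne']

lemma choose_mul_pow_mul_pow_le_two_rpow_neg_klBin {m k : ℕ} (hm : 0 < m) (hk : k ≤ m)
    {p : ℝ} (hp0 : 0 ≤ p) (hp1 : p ≤ 1) (hfin : ¬((p = 0 ∨ p = 1) ∧ (k / m : ℝ) ≠ p)) :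
    m.choose k * p ^ k * (1 - p) ^ (m - k) ≤ (2 : ℝ) ^ (-(m * klBin (k / m) p)) := by
  set a : ℝ := k / m
  have hm' : (0 : ℝ) < m := Nat.cast_pos.mpr hm
  have hma : (m : ℝ) * a = k := mul_div_cancel₀ _ hm'.ne'
  have hma' : (m : ℝ) * (1 - a) = (m - k : ℕ) := by rw [Nat.cast_sub hk, mul_one_sub, hma]
  have ha0 : 0 ≤ a := by positivity
  have ha1 : a ≤ 1 := div_le_one_of_le₀ (by exact_mod_cast hk) hm'.le
  have hk_pos : k ≠ 0 → 0 < a ∧ 0 < p := fun hk0 => by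
    have ha : 0 < a := div_pos (Nat.cast_pos.mpr (Nat.pos_of_ne_zero hk0)) hm'
    refine ⟨ha, hp0.lt_of_ne ?_⟩
    rintro rfl
    exact hfin ⟨Or.inl rfl, ha.ne'⟩
  have hmk_pos : m - k ≠ 0 → 0 < 1 - a ∧ 0 < 1 - p := fun hmk => by
    have ha : a < 1 := by rw [div_lt_one hm']; exact_mod_cast (by omega : k < m)
    refine ⟨sub_pos.mpr ha, sub_pos.mpr (hp1.lt_of_ne ?_)⟩
    rintro rfl
    exact hfin ⟨Or.inr rfl, ha.ne⟩
  have hbinomial_le_one : (m.choose k : ℝ) * a ^ k * (1 - a) ^ (m - k) ≤ 1 :=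
    (ProbabilityTheory.binomial_real_singleton m k ⟨a, ha0, ha1⟩).symm.trans_le measureReal_le_one
  have hsplit : -(m * klBin a p) =
      -(k * Real.logb 2 (a / p)) + -((m - k : ℕ) * Real.logb 2 ((1 - a) / (1 - p))) := by
    rw [klBin, ← hma, ← hma']; ring
  calc (m.choose k : ℝ) * p ^ k * (1 - p) ^ (m - k)
      = (m.choose k * a ^ k * (1 - a) ^ (m - k)) * ((2 : ℝ) ^ (-(k * Real.logb 2 (a / p))) *
          (2 : ℝ) ^ (-((m - k : ℕ) * Real.logb 2 ((1 - a) / (1 - p))))) := by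
        rw [← pow_mul_two_rpow_neg_mul_logb_div hk_pos, ← pow_mul_two_rpow_neg_mul_logb_div hmk_pos]
        ring
    _ ≤ (2 : ℝ) ^ (-(k * Real.logb 2 (a / p))) *
          (2 : ℝ) ^ (-((m - k : ℕ) * Real.logb 2 ((1 - a) / (1 - p)))) :=
        mul_le_of_le_one_left (by positivity) hbinomial_le_one
    _ = (2 : ℝ) ^ (-(m * klBin a p)) := by rw [hsplit, Real.rpow_add zero_lt_two]

lemma choose_mul_pow_mul_pow_le_of_lt_klBinE {m k : ℕ} (hm : 0 < m) (hk : k ≤ m)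
    {p : ℝ} (hp0 : 0 ≤ p) (hp1 : p ≤ 1) {ε : ℝ} (hε : (ε : EReal) < klBinE (k / m) p) :
    m.choose k * p ^ k * (1 - p) ^ (m - k) ≤ (2 : ℝ) ^ (-(m * ε)) := by
  unfold klBinE at hε
  split_ifs at hε with hinf
  -- in the infinite case one of the factors `p ^ k`, `(1 - p) ^ (m - k)` vanishes
  · obtain ⟨rfl | rfl, hne⟩ := hinf
    · have hk0 : k ≠ 0 := by rintro rfl; simp at hne
      simp only [zero_pow hk0, mul_zero, zero_mul]
      positivity
    · have hmk : m - k ≠ 0 := by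
        intro hmk
        exact hne (by rw [show k = m by omega, div_self (Nat.cast_pos.mpr hm).ne'])
      simp only [sub_self, zero_pow hmk, mul_zero]
      positivity
  · refine (choose_mul_pow_mul_pow_le_two_rpow_neg_klBin hm hk hp0 hp1 hinf).trans
      (Real.rpow_le_rpow_of_exponent_le one_le_two ?_)
    exact neg_le_neg <|
      mul_le_mul_of_nonneg_left (EReal.coe_lt_coe_iff.mp hε).le (Nat.cast_nonneg m)

section BernoulliCount

open Finset

variable {Y ι : Type*} [Fintype ι] (P : Y → Prop) [DecidablePred P]

lemma setOf_filter_eq_eq_pi (T : Finset ι) :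
    {S : ι → Y | univ.filter (fun t => P (S t)) = T} =
      Set.univ.pi fun t => {y | P y ↔ t ∈ T} := by
  ext S
  simp [Finset.ext_iff]

variable [MeasurableSpace Y] (μ : Measure Y)

lemma measure_pi_filter_eq [SigmaFinite μ] (T : Finset ι) :
    Measure.pi (fun _ : ι => μ) {S | univ.filter (fun t => P (S t)) = T} =
      μ {y | P y} ^ #T * μ {y | P y}ᶜ ^ (Fintype.card ι - #T) := by
  classical
  have hfactor : ∀ t, μ {y | P y ↔ t ∈ T} = if t ∈ T then μ {y | P y} else μ {y | P y}ᶜ :=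
    fun t => by split_ifs with ht <;> simp [ht, Set.compl_def]
  rw [setOf_filter_eq_eq_pi, Measure.pi_pi, prod_congr rfl fun t _ => hfactor t, prod_ite]
  simp [filter_not, card_univ_sdiff]

lemma measure_pi_card_filter_eq [SigmaFinite μ] (hP : MeasurableSet {y | P y}) (k : ℕ) :
    Measure.pi (fun _ : ι => μ) {S | #(univ.filter fun t => P (S t)) = k} =
      (Fintype.card ι).choose k * μ {y | P y} ^ k * μ {y | P y}ᶜ ^ (Fintype.card ι - k) := by
  set f : (ι → Y) → Finset ι := fun S => univ.filter fun t => P (S t)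
  have hfiber : ∀ T, MeasurableSet (f ⁻¹' {T}) := fun T => by
    change MeasurableSet {S | f S = T}
    refine setOf_filter_eq_eq_pi P T ▸ MeasurableSet.univ_pi fun t => ?_
    by_cases ht : t ∈ T
    · simpa only [ht, iff_true] using hP
    · simp only [ht, iff_false]
      exact hP.compl
  have hcount : {S | #(f S) = k} = f ⁻¹' ↑(powersetCard k (univ : Finset ι)) := by
    ext S
    simp [f]
  rw [hcount, ← sum_measure_preimage_singleton _ fun T _ => hfiber T,
    sum_congr rfl fun T hT => (mem_powersetCard.mp hT).2 ▸ measure_pi_filter_eq P μ T]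
  simp [mul_assoc]

lemma measureReal_pi_card_filter_eq [IsProbabilityMeasure μ] (hP : MeasurableSet {y | P y})
    (k : ℕ) :
    (Measure.pi fun _ : ι => μ).real {S | #(univ.filter fun t => P (S t)) = k} =
      (Fintype.card ι).choose k * μ.real {y | P y} ^ k *
        (1 - μ.real {y | P y}) ^ (Fintype.card ι - k) := by
  rw [← probReal_compl_eq_one_sub hP, measureReal_def, measure_pi_card_filter_eq P μ hP]
  simp [measureReal_def]

lemma measure_pi_lt_klBinE_le [IsProbabilityMeasure μ] (hP : MeasurableSet {y | P y}) {m : ℕ}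
    (hm : 0 < m) (ε : ℝ) :
    Measure.pi (fun _ : Fin m => μ)
        {S | (ε : EReal) < klBinE (#(univ.filter fun t => P (S t)) / m) (μ.real {y | P y})} ≤
      ENNReal.ofReal ((m + 1) * 2 ^ (-(m * ε))) := by
  set count : (Fin m → Y) → ℕ := fun S => #(univ.filter fun t => P (S t))
  set K := (range (m + 1)).filter fun k : ℕ => (ε : EReal) < klBinE (k / m) (μ.real {y | P y})
  have hcover : {S | (ε : EReal) < klBinE (count S / m) (μ.real {y | P y})} ⊆
      ⋃ k ∈ K, {S | count S = k} := fun S hS => by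
    have : count S ≤ m := (card_filter_le _ _).trans (card_fin m).le
    simp only [Set.mem_iUnion]
    exact ⟨count S, mem_filter.mpr ⟨mem_range.mpr (by omega), hS⟩, rfl⟩
  have hK : ∀ k ∈ K, Measure.pi (fun _ : Fin m => μ) {S | count S = k} ≤
      ENNReal.ofReal (2 ^ (-(m * ε))) := fun k hk => by
    rw [mem_filter, mem_range] at hk
    rw [← ofReal_measureReal, measureReal_pi_card_filter_eq P μ hP, Fintype.card_fin]
    exact ENNReal.ofReal_le_ofReal (choose_mul_pow_mul_pow_le_of_lt_klBinE hm (by omega)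
      measureReal_nonneg measureReal_le_one hk.2)
  calc _ ≤ _ := measure_mono hcover
    _ ≤ _ := measure_biUnion_finset_le _ _
    _ ≤ #K • ENNReal.ofReal (2 ^ (-(m * ε))) := sum_le_card_nsmul _ _ _ hK
    _ ≤ (m + 1) • ENNReal.ofReal (2 ^ (-(m * ε))) :=
      nsmul_le_nsmul_left zero_le ((card_filter_le _ _).trans (card_range _).le)
    _ = ENNReal.ofReal ((m + 1) * 2 ^ (-(m * ε))) := by
      rw [nsmul_eq_mul, ENNReal.ofReal_mul (by positivity)]
      norm_cast

end BernoulliCount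

lemma ofReal_one_sub_le_of_measure_compl_le {α : Type*} [MeasurableSpace α] {μ : Measure α}
    [IsProbabilityMeasure μ] {s : Set α} {δ : ℝ} (hδ : 0 ≤ δ) (h : μ sᶜ ≤ ENNReal.ofReal δ) :
    ENNReal.ofReal (1 - δ) ≤ μ s := by
  rw [ENNReal.ofReal_sub _ hδ, ENNReal.ofReal_one, tsub_le_iff_right, ← measure_univ (μ := μ)]
  exact (measure_univ_le_add_compl s).trans (add_le_add le_rfl h)

namespace LearningSetup

variable {X I : Type} [MeasurableSpace X] (L : LearningSetup X I)

lemma measurableSet_misclassified (i : I) : MeasurableSet {p : X × Bool | L.hyp i p.1 ≠ p.2} :=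
  (measurableSet_eq_fun ((L.hyp_measurable i).comp measurable_fst) measurable_snd).compl

lemma succ_mul_two_rpow_neg_eq {m : ℕ} (hm : 0 < m) {δ : ℝ} (hδ : 0 < δ) {i : I}
    (hi : 0 < L.prior i) :
    ((m : ℝ) + 1) * 2 ^ (-(m * ((L.desc i + Real.logb 2 ((m + 1) / δ)) / m))) =
      L.prior i * δ := by
  rw [mul_div_cancel₀ _ (Nat.cast_pos.mpr hm).ne', desc, neg_add, neg_neg, ← Real.logb_inv,
    inv_div, Real.rpow_add zero_lt_two, Real.rpow_logb zero_lt_two (by norm_num) hi,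
    Real.rpow_logb zero_lt_two (by norm_num) (by positivity)]
  field_simp

lemma sampleMeasure_lt_klBinE_le {m : ℕ} (hm : 0 < m) {δ : ℝ} (hδ : 0 < δ) {i : I}
    (hi : 0 < L.prior i) :
    L.sampleMeasure m {S | (((L.desc i + Real.logb 2 ((m + 1) / δ)) / m : ℝ) : EReal) <
      klBinE (L.empErr m i S) (L.popErr i)} ≤ ENNReal.ofReal (L.prior i * δ) := by
  have := L.isProb
  rw [← L.succ_mul_two_rpow_neg_eq hm hδ hi]
  exact measure_pi_lt_klBinE_le (fun p : X × Bool => L.hyp i p.1 ≠ p.2) L.D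
    (L.measurableSet_misclassified i) hm _

instance isProbabilityMeasure_sampleMeasure (m : ℕ) :
    IsProbabilityMeasure (L.sampleMeasure m) :=
  have := L.isProb
  Measure.pi.instIsProbabilityMeasure _

lemma sampleMeasure_exists_lt_klBinE_le {m : ℕ} (hm : 0 < m) {δ : ℝ} (hδ : 0 < δ) :
    L.sampleMeasure m {S | ∃ i, 0 < L.prior i ∧
      (((L.desc i + Real.logb 2 ((m + 1) / δ)) / m : ℝ) : EReal) <
        klBinE (L.empErr m i S) (L.popErr i)} ≤ ENNReal.ofReal δ := by
  have := L.countable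
  calc _ ≤ ∑' i, L.sampleMeasure m {S | 0 < L.prior i ∧
        (((L.desc i + Real.logb 2 ((m + 1) / δ)) / m : ℝ) : EReal) <
          klBinE (L.empErr m i S) (L.popErr i)} := by
        rw [Set.ofPred_exists]
        exact measure_iUnion_le _
    _ ≤ ∑' i, ENNReal.ofReal (L.prior i) * ENNReal.ofReal δ := ENNReal.tsum_le_tsum fun i => by
        by_cases hi : 0 < L.prior i
        · rw [← ENNReal.ofReal_mul (L.prior_nonneg i)]
          exact (measure_mono fun S hS => hS.2).trans (L.sampleMeasure_lt_klBinE_le hm hδ hi)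
        · simp [hi]
    _ = (∑' i, ENNReal.ofReal (L.prior i)) * ENNReal.ofReal δ := ENNReal.tsum_mul_right
    _ ≤ ENNReal.ofReal δ := mul_le_of_le_one_left' L.prior_tsum_le_one

end LearningSetup

theorem pac_bayes_kl_bound_general
    (X : Type) [MeasurableSpace X] (I : Type) (L : LearningSetup X I)
    (m : ℕ) (hm : 1 ≤ m) (δ : ℝ) (hδ0 : 0 < δ) :
    ENNReal.ofReal (1 - δ) ≤
      L.sampleMeasure m
        {S | ∀ i : I, 0 < L.prior i →
          klBinE (L.empErr m i S) (L.popErr i) ≤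
            (((L.desc i + Real.logb 2 ((m + 1) / δ)) / m : ℝ) : EReal)} := by
  refine ofReal_one_sub_le_of_measure_compl_le hδ0.le
    ((measure_mono fun S hS => ?_).trans (L.sampleMeasure_exists_lt_klBinE_le hm hδ0))
  simpa only [Set.mem_compl_iff, Set.mem_ofPred_eq, not_forall, not_le, exists_prop] using hS

theorem pac_bayes_kl_bound
    (X : Type) [MeasurableSpace X] (I : Type) (L : LearningSetup X I)
    (m : ℕ) (hm : 1 ≤ m) (δ : ℝ) (hδ0 : 0 < δ) (hδ1 : δ < 1) :
    ENNReal.ofReal (1 - δ) ≤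
      L.sampleMeasure m
        {S | ∀ i : I, 0 < L.prior i →
          klBinE (L.empErr m i S) (L.popErr i) ≤
            (((L.desc i + Real.logb 2 ((m + 1) / δ)) / m : ℝ) : EReal)} :=
  pac_bayes_kl_bound_general X I L m hm δ hδ0
end
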